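/- Let y ∈ A⟦t⟧ with constant coefficient 1 satisfy L(y) = 0, and let b ∈ A⟦t⟧ with constant coefficient 0 satisfy L(b) + 2·P̂·y′ + P̂′·y = 0 (the condition that ŷ := y·log t + b is a logarithmic solution of L). Then P̂·y² + P·(y·b′ − y′·b) = κ as power series; that is, the Wronskian of the Frobenius basis {y, y·log t + b} equals the constant κ divided by P. -/

import Mathlib

noncomputable section

open PowerSeries

/-- The ring of accessory parameters: polynomials in `ρ_0, …, ρ_{n-4}` over `ℂ`. -/
abbrev AccRing (n : ℕ) : Type := MvPolynomial (Fin (n - 3)) ℂ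

/-- Coefficientwise partial derivative of a power series with respect to the
accessory parameter `ρ_i`. -/
noncomputable def pd {n : ℕ} (i : Fin (n - 3)) (u : PowerSeries (AccRing n)) :
    PowerSeries (AccRing n) :=
  PowerSeries.mk fun m => MvPolynomial.pderiv i (PowerSeries.coeff (R := AccRing n) m u)

/-- The polynomial `P = t·∏_{j=1}^{n-2}(t - α_j)`, viewed in `A⟦t⟧`. -/
noncomputable def Ppoly (n : ℕ) (α : Fin (n - 2) → ℂ) : PowerSeries (AccRing n) :=
  X * ∏ j, (X - C (R := AccRing n) (MvPolynomial.C (α j)))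

/-- The polynomial `P̂ = P/t = ∏_{j=1}^{n-2}(t - α_j)`, viewed in `A⟦t⟧`. -/
noncomputable def PhatPoly (n : ℕ) (α : Fin (n - 2) → ℂ) : PowerSeries (AccRing n) :=
  ∏ j, (X - C (R := AccRing n) (MvPolynomial.C (α j)))

/-- `κ = P̂(0) = (-1)^(n-2) ∏ α_j`. -/
noncomputable def kappa (n : ℕ) (α : Fin (n - 2) → ℂ) : ℂ :=
  (-1) ^ (n - 2) * ∏ j, α j

/-- `P1 = (1 - n/2)²·t^(n-3) - ∑_{i=0}^{n-4} ρ_i·t^i`, viewed in `A⟦t⟧`. -/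
noncomputable def P1poly (n : ℕ) : PowerSeries (AccRing n) :=
  C (R := AccRing n) (MvPolynomial.C ((1 - (n : ℂ) / 2) ^ 2)) * X ^ (n - 3)
    - ∑ i : Fin (n - 3), C (R := AccRing n) (MvPolynomial.X i) * X ^ (i : ℕ)

/-- The differential operator `L u = (P·u')' + P1·u`. -/
noncomputable def Lop (n : ℕ) (α : Fin (n - 2) → ℂ) (u : PowerSeries (AccRing n)) :
    PowerSeries (AccRing n) :=
  derivative (AccRing n) (Ppoly n α * derivative (AccRing n) u) + P1poly n * u

/-- Formal antiderivative with zero constant term. -/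
noncomputable def integ {A : Type*} [CommRing A] [Algebra ℚ A] (u : PowerSeries A) :
    PowerSeries A :=
  PowerSeries.mk fun m => if m = 0 then 0 else ((m : ℚ)⁻¹) • PowerSeries.coeff (R := A) (m - 1) u

/-- Formal substitution of the power series `S` (with zero constant term) into `G`. -/
noncomputable def substS {A : Type*} [CommSemiring A] (S G : PowerSeries A) : PowerSeries A :=
  PowerSeries.mk fun m =>
    ∑ j ∈ Finset.range (m + 1), PowerSeries.coeff (R := A) j G * PowerSeries.coeff (R := A) m (S ^ j)

/-- The operator `θ G = X·dG/dX`. -/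
noncomputable def theta {A : Type*} [CommRing A] (G : PowerSeries A) : PowerSeries A :=
  PowerSeries.X * PowerSeries.derivative A G

/-- The formal Eichler integral: divide the `m`-th coefficient by `m³`. -/
noncomputable def eich {A : Type*} [CommRing A] [Algebra ℚ A] (H : PowerSeries A) :
    PowerSeries A :=
  PowerSeries.mk fun m => (((m : ℚ) ^ 3)⁻¹) • PowerSeries.coeff (R := A) m H

/-- Formal exponential of a power series with zero constant term. -/
noncomputable def expS {A : Type*} [CommRing A] [Algebra ℚ A] (S : PowerSeries A) :
    PowerSeries A :=
  substS S (PowerSeries.exp A)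

/-!
Because `L` is in self-adjoint form, Abel's identity makes `P·W(y, ŷ)` constant for
`ŷ = y·log t + b`: its derivative vanishes once `L y = 0` and `L ŷ = 0`, the latter being the
stated equation for `b`. The constant is read off at `t = 0`, where `P` vanishes, `P̂` equals `κ`
and `y` equals `1`.
-/

namespace Derivation

variable {R A : Type*} [CommRing R] [CommRing A] [Algebra R A]

/-- `P·W(y, y·log t + b)` written without the logarithm, valid when `P = t·Q`. -/
def frobeniusWronskian (D : Derivation R A A) (P Q y b : A) : A :=
  Q * y ^ 2 + P * (y * D b - D y * b)

theorem map_frobeniusWronskian_eq_zero (D : Derivation R A A) {P Q P₁ y b : A}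
    (hy : D (P * D y) + P₁ * y = 0)
    (hb : D (P * D b) + P₁ * b + 2 * Q * D y + D Q * y = 0) :
    D (frobeniusWronskian D P Q y b) = 0 := by
  simp only [frobeniusWronskian, leibniz, leibniz_pow, map_add, map_sub, smul_eq_mul] at hy hb ⊢
  linear_combination y * hb - b * hy

end Derivation

theorem constantCoeff_Ppoly (n : ℕ) (α : Fin (n - 2) → ℂ) :
    constantCoeff (Ppoly n α) = 0 := by
  simp [Ppoly]

theorem constantCoeff_PhatPoly (n : ℕ) (α : Fin (n - 2) → ℂ) :
    constantCoeff (PhatPoly n α) = MvPolynomial.C (kappa n α) := by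
  simp [PhatPoly, kappa, Finset.prod_neg]

theorem stmt5_general (n : ℕ) (α : Fin (n - 2) → ℂ)
    (y b : PowerSeries (AccRing n))
    (hy1 : constantCoeff (R := AccRing n) y = 1) (hy : Lop n α y = 0)
    (hb : Lop n α b + 2 * PhatPoly n α * derivative (AccRing n) y
        + derivative (AccRing n) (PhatPoly n α) * y = 0) :
    PhatPoly n α * y ^ 2
        + Ppoly n α * (y * derivative (AccRing n) b - derivative (AccRing n) y * b)
      = C (R := AccRing n) (MvPolynomial.C (kappa n α)) := by
  change Derivation.frobeniusWronskian _ (Ppoly n α) (PhatPoly n α) y b = _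
  apply derivative.ext
  · rw [derivative_C]
    exact Derivation.map_frobeniusWronskian_eq_zero _ hy hb
  · simp [Derivation.frobeniusWronskian, constantCoeff_Ppoly, constantCoeff_PhatPoly, hy1]

/-- the Wronskian identity `P̂·y² + P·(y·b' - y'·b) = κ` for the
Frobenius basis `{y, y·log t + b}`. -/
theorem stmt5 (n : ℕ) (hn : 4 ≤ n) (α : Fin (n - 2) → ℂ)
    (hα0 : ∀ j, α j ≠ 0) (hαinj : Function.Injective α)
    (y b : PowerSeries (AccRing n))
    (hy1 : constantCoeff (R := AccRing n) y = 1) (hy : Lop n α y = 0)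
    (hb0 : constantCoeff (R := AccRing n) b = 0)
    (hb : Lop n α b + 2 * PhatPoly n α * derivative (AccRing n) y
        + derivative (AccRing n) (PhatPoly n α) * y = 0) :
    PhatPoly n α * y ^ 2
        + Ppoly n α * (y * derivative (AccRing n) b - derivative (AccRing n) y * b)
      = C (R := AccRing n) (MvPolynomial.C (kappa n α)) :=
  stmt5_general n α y b hy1 hy hb
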